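/- Let X be an ε-dense finite subset of S^n (every open ε-ball in S^n contains a point of X), let k ≥ 0, and suppose δ + ε < cov_{S^n}(2k+2). Then for any 2k+2 points x₁,…,x_{2k+2} ∈ X, there exists a point x ∈ X with d(x, x_i) < π - δ for all i = 1,…,2k+2. -/

import Mathlib

/-!
The antipodes of `x₁, …, x_{2k+2}` are too few to cover the sphere with radius `δ + ε`, so some
`y` lies farther than `δ + ε` from all of them. A point `z ∈ X` within `ε` of `y` is then, by the
triangle inequality, farther than `δ` from every `-xᵢ`, that is, closer than `π - δ` to every `xᵢ`.
-/

/-- The unit `n`-sphere as a subtype of `ℝ^{n+1}`. -/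
def Sph (n : ℕ) : Type := {v : EuclideanSpace ℝ (Fin (n + 1)) // ‖v‖ = 1}

/-- Geodesic distance on the unit sphere. -/
noncomputable def gdS {n : ℕ} (x y : Sph n) : ℝ :=
  Real.arccos (inner ℝ x.1 y.1)

/-- The `k`-th covering radius of the sphere with respect to the geodesic metric. -/
noncomputable def covRadiusSph (n k : ℕ) : ℝ :=
  sInf {r : ℝ | 0 ≤ r ∧ ∃ x : Fin k → Sph n, ∀ y : Sph n, ∃ i, gdS y (x i) ≤ r}

namespace Sph

variable {n : ℕ}

instance : Nonempty (Sph n) :=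
  ⟨⟨EuclideanSpace.single 0 1, by simp⟩⟩

def antipode (x : Sph n) : Sph n := ⟨-x.1, by rw [norm_neg]; exact x.2⟩

end Sph

open InnerProductGeometry

variable {n : ℕ}

lemma gdS_nonneg (x y : Sph n) : 0 ≤ gdS x y := Real.arccos_nonneg _

lemma gdS_eq_angle (x y : Sph n) : gdS x y = angle x.1 y.1 := by
  simp [gdS, angle, x.2, y.2]

lemma gdS_triangle (x y z : Sph n) : gdS x z ≤ gdS x y + gdS y z := by
  simpa only [gdS_eq_angle] using angle_le_angle_add_angle x.1 y.1 z.1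

lemma gdS_antipode (x y : Sph n) : gdS x y.antipode = Real.pi - gdS x y := by
  rw [gdS, gdS, Sph.antipode, inner_neg_right, Real.arccos_neg]

lemma exists_forall_lt_gdS_of_lt_covRadiusSph {k : ℕ} {r : ℝ} (hr : r < covRadiusSph n k)
    (x : Fin k → Sph n) : ∃ y : Sph n, ∀ i, r < gdS y (x i) := by
  by_contra! hcover
  rcases lt_or_ge r 0 with hneg | hnonneg
  · obtain ⟨i, hi⟩ := hcover (Classical.arbitrary _)
    linarith [gdS_nonneg (Classical.arbitrary (Sph n)) (x i)]
  · have : covRadiusSph n k ≤ r := csInf_le ⟨0, fun _ hs => hs.1⟩ ⟨hnonneg, x, hcover⟩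
    linarith

theorem stmt11_general {n : ℕ} (ε δ : ℝ) (k : ℕ)
    (X : Finset (Sph n)) (hdense : ∀ y : Sph n, ∃ x ∈ X, gdS y x < ε)
    (hcov : δ + ε < covRadiusSph n (2 * k + 2))
    (x : Fin (2 * k + 2) → Sph n) :
    ∃ z ∈ X, ∀ i, gdS z (x i) < Real.pi - δ := by
  obtain ⟨y, hy⟩ := exists_forall_lt_gdS_of_lt_covRadiusSph hcov fun i => (x i).antipode
  obtain ⟨z, hzX, hyz⟩ := hdense y
  refine ⟨z, hzX, fun i => ?_⟩
  have htri := gdS_triangle y z (x i).antipode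
  rw [gdS_antipode z] at htri
  linarith [hy i]

theorem stmt11 {n : ℕ} (ε δ : ℝ) (hε : 0 < ε) (hδ : 0 < δ) (k : ℕ)
    (X : Finset (Sph n)) (hdense : ∀ y : Sph n, ∃ x ∈ X, gdS y x < ε)
    (hcov : δ + ε < covRadiusSph n (2 * k + 2))
    (x : Fin (2 * k + 2) → Sph n) (hx : ∀ i, x i ∈ X) :
    ∃ z ∈ X, ∀ i, gdS z (x i) < Real.pi - δ :=
  stmt11_general ε δ k X hdense hcov x
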